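/- arXiv:2009.05969 — 2 statements merged into one kernel-verified Lean document; each statement's English description precedes it below -/
import Mathlib

section
/- Let n ≥ rk, k,r ≥ 2, 0 ≤ s < k, n > a+s, and a ≥ r(k-s)-1. Then ecd^r(H(n,k,a,s), s) = n - a. -/
open Finset

/-- `A ⊆ₛ B`: there exists `E` with `|E| ≤ s` and `A \ E ⊆ B`. -/
def subS {α : Type*} [DecidableEq α] (s : ℕ) (A B : Finset α) : Prop :=
  ∃ E : Finset α, E.card ≤ s ∧ A \ E ⊆ B

/-- `X` is an equitable partition of `G` (pairwise disjoint parts, union `G`,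
part sizes pairwise differing by at most 1). -/
def EquitableParts {ι α : Type*} [Fintype ι] [DecidableEq α]
    (G : Finset α) (X : ι → Finset α) : Prop :=
  (∀ i j, i ≠ j → Disjoint (X i) (X j)) ∧
  Finset.univ.biUnion X = G ∧
  ∀ i j, (X i).card ≤ (X j).card + 1

/-- Generalized equitable `r`-colorability defect `ecd^r(F, s)` on ground set `G`. -/
noncomputable def ecd {α : Type*} [DecidableEq α] (G : Finset α) (r s : ℕ)
    (F : Set (Finset α)) : ℕ :=
  sInf {m | ∃ X0 ⊆ G, X0.card = m ∧ ∃ X : Fin r → Finset α,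
    EquitableParts (G \ X0) X ∧ ∀ A ∈ F, ∀ i, ¬ subS s A (X i)}

/-- Equitable `r`-colorability defect (plain containment). -/
noncomputable def ecd0 {α : Type*} [DecidableEq α] (G : Finset α) (r : ℕ)
    (F : Set (Finset α)) : ℕ :=
  sInf {m | ∃ X0 ⊆ G, X0.card = m ∧ ∃ X : Fin r → Finset α,
    EquitableParts (G \ X0) X ∧ ∀ A ∈ F, ∀ i, ¬ A ⊆ X i}

/-- The family of all `k`-subsets of `[n] = {1, …, n}`. -/
def kSubsets (n k : ℕ) : Set (Finset ℕ) :=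
  {F | F ⊆ Finset.Icc 1 n ∧ F.card = k}

/-- The family `H(n,k,a,s)` of `k`-subsets `F` of `[n]` with `F ⊄ₛ {n-a+1,…,n}`. -/
def Hfam (n k a s : ℕ) : Set (Finset ℕ) :=
  {F | F ⊆ Finset.Icc 1 n ∧ F.card = k ∧ ¬ subS s F (Finset.Icc (n - a + 1) n)}

/-- The family of `t`-wide `k`-subsets of `[n]`. -/
def tWide (n k t : ℕ) : Set (Finset ℕ) :=
  {F | F ⊆ Finset.Icc 1 n ∧ F.card = k ∧
    ∀ i ∈ Finset.Icc 1 (n - t + 1), ¬ F ⊆ Finset.Icc i (i + t - 1)}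

/-- `P` is a partition of `[n]` into pairwise disjoint pieces. -/
def IsPartition (n : ℕ) (P : Finset (Finset ℕ)) : Prop :=
  (∀ p ∈ P, ∀ q ∈ P, p ≠ q → Disjoint p q) ∧ P.sup id = Finset.Icc 1 n

/-- `A` is `P`-admissible: it meets every part of `P` in at most one element. -/
def Adm (P : Finset (Finset ℕ)) (A : Finset ℕ) : Prop :=
  ∀ p ∈ P, (A ∩ p).card ≤ 1


/-
The defect `n - a` is attained by discarding `[n] \ A` and splitting `A = {n-a+1, …, n}`
equitably into `r` parts: a part `Xᵢ ⊆ A` cannot `s`-contain a member of `H(n,k,a,s)`, since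
that member would then be `s`-contained in `A`.

Conversely, if fewer than `n - a` points are discarded, more than `a ≥ r(k-s) - 1` points are
coloured, so every part has at least `k - s` points, and some part `X` contains a point `x ∉ A`.
Take a set `T` of `s + 1` points of `[n] \ A` containing `x`, and complete it to a `k`-set `F`
inside `X ∪ T` or, if that is too small, around `X ∪ T`. Then `F ∈ H(n,k,a,s)`, while at most `s` points
of `F` lie outside `X`.
-/

section SubS

variable {α : Type*} [DecidableEq α] {s : ℕ} {A B C : Finset α}

theorem subS_iff_card_sdiff_le : subS s A B ↔ (A \ B).card ≤ s := by
  constructor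
  · rintro ⟨E, hE, hAE⟩
    refine le_trans (card_le_card fun y hy => ?_) hE
    rw [mem_sdiff] at hy
    by_contra hyE
    exact hy.2 (hAE (mem_sdiff.2 ⟨hy.1, hyE⟩))
  · intro h
    exact ⟨A \ B, h, fun y hy => by simp_all⟩

theorem subS.mono_right (h : subS s A B) (hBC : B ⊆ C) : subS s A C :=
  let ⟨E, hE, hAE⟩ := h
  ⟨E, hE, hAE.trans hBC⟩

end SubS

section EquitableParts

variable {ι α : Type*} [Fintype ι] [DecidableEq α] {G : Finset α} {X : ι → Finset α}

theorem EquitableParts.subset (h : EquitableParts G X) (i : ι) : X i ⊆ G :=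
  h.2.1 ▸ subset_biUnion_of_mem X (mem_univ i)

theorem EquitableParts.exists_mem (h : EquitableParts G X) {x : α} (hx : x ∈ G) :
    ∃ i, x ∈ X i := by
  rw [← h.2.1] at hx
  simpa using hx

theorem EquitableParts.sum_card (h : EquitableParts G X) : ∑ i, (X i).card = G.card := by
  rw [← h.2.1, card_biUnion fun i _ j _ hij => h.1 i j hij]

theorem EquitableParts.le_card (h : EquitableParts G X) {c : ℕ}
    (hc : Fintype.card ι * c ≤ G.card) (j : ι) : c ≤ (X j).card := by
  by_contra! hj
  have hlt : ∑ i, (X i).card < ∑ _i : ι, c :=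
    sum_lt_sum (fun i _ => by have := h.2.2 i j; omega) ⟨j, mem_univ j, hj⟩
  rw [h.sum_card, sum_const, card_univ, smul_eq_mul] at hlt
  omega

/-- Adding a new point to a smallest part keeps the partition equitable. -/
theorem exists_equitableParts [Nonempty ι] [DecidableEq ι] (G : Finset α) :
    ∃ X : ι → Finset α, EquitableParts G X := by
  induction G using Finset.induction_on with
  | empty => exact ⟨fun _ => ∅, fun _ _ _ => disjoint_empty_left _, by ext; simp, by simp⟩
  | insert y G hy ih =>
    obtain ⟨X, hdisj, hunion, hcard⟩ := ih
    obtain ⟨i₀, -, hmin⟩ := exists_min_image univ (fun i => (X i).card) univ_nonempty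
    have hyX : ∀ i, y ∉ X i := fun i hi => hy (hunion ▸ subset_biUnion_of_mem X (mem_univ i) hi)
    refine ⟨fun i => if i = i₀ then insert y (X i) else X i, fun i j hij => ?_, ?_, fun i j => ?_⟩
    · dsimp only
      split_ifs with hi hj hj
      · exact absurd (hi.trans hj.symm) hij
      · exact disjoint_insert_left.2 ⟨hyX j, hdisj i j hij⟩
      · exact disjoint_insert_right.2 ⟨hyX i, hdisj i j hij⟩
      · exact hdisj i j hij
    · ext z
      simp only [mem_biUnion, mem_univ, true_and, mem_insert, ← hunion]
      constructor
      · rintro ⟨i, hz⟩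
        split_ifs at hz with hi
        · exact (mem_insert.1 hz).imp_right fun hz => ⟨i, hz⟩
        · exact Or.inr ⟨i, hz⟩
      · rintro (rfl | ⟨i, hz⟩)
        · exact ⟨i₀, by simp⟩
        · exact ⟨i, by split_ifs <;> simp [hz]⟩
    · have := hmin j (mem_univ j)
      have := hcard i j
      have := hcard i i₀
      dsimp only
      split_ifs <;> subst_vars <;> (try rw [card_insert_of_notMem (hyX _)]) <;> omega

end EquitableParts

section Defect

variable {α : Type*} [DecidableEq α] {G A X₀ : Finset α} {r s : ℕ} {F : Set (Finset α)}

/-- The data `(X₀, X)` over which `ecd G r s F` minimises `|X₀|`. -/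
def IsEquitableColoring (G : Finset α) (r s : ℕ) (F : Set (Finset α)) (X₀ : Finset α)
    (X : Fin r → Finset α) : Prop :=
  X₀ ⊆ G ∧ EquitableParts (G \ X₀) X ∧ ∀ B ∈ F, ∀ i, ¬ subS s B (X i)

theorem ecd_le {X : Fin r → Finset α} (h : IsEquitableColoring G r s F X₀ X) :
    ecd G r s F ≤ X₀.card :=
  Nat.sInf_le ⟨X₀, h.1, rfl, X, h.2⟩

theorem le_ecd {m : ℕ} (hne : ∃ X₀ X, IsEquitableColoring G r s F X₀ X)
    (h : ∀ X₀ X, IsEquitableColoring G r s F X₀ X → m ≤ X₀.card) : m ≤ ecd G r s F := by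
  obtain ⟨X₀, X, hX⟩ := hne
  exact le_csInf ⟨_, X₀, hX.1, rfl, X, hX.2⟩ fun _ ⟨Y₀, hY₀, hm, Y, hY⟩ => hm ▸ h Y₀ Y ⟨hY₀, hY⟩

theorem exists_isEquitableColoring_sdiff (hr : 0 < r) (hA : A ⊆ G)
    (hF : ∀ B ∈ F, ¬ subS s B A) : ∃ X, IsEquitableColoring G r s F (G \ A) X := by
  have : Nonempty (Fin r) := ⟨⟨0, hr⟩⟩
  obtain ⟨X, hX⟩ := exists_equitableParts (ι := Fin r) A
  refine ⟨X, sdiff_subset, by rwa [Finset.sdiff_sdiff_eq_self hA], fun B hB i hBX => ?_⟩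
  exact hF B hB (hBX.mono_right (hX.subset i))

end Defect

theorem exists_subset_card_eq_of_subset_or_superset {α : Type*} {T Y G : Finset α} {k : ℕ}
    (hTY : T ⊆ Y) (hYG : Y ⊆ G) (hT : T.card ≤ k) (hG : k ≤ G.card) :
    ∃ F, T ⊆ F ∧ F ⊆ G ∧ F.card = k ∧ (F ⊆ Y ∨ Y ⊆ F) := by
  rcases le_total k Y.card with hY | hY
  · obtain ⟨F, hTF, hFY, hF⟩ := exists_subsuperset_card_eq hTY hT hY
    exact ⟨F, hTF, hFY.trans hYG, hF, Or.inl hFY⟩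
  · obtain ⟨F, hYF, hFG, hF⟩ := exists_subsuperset_card_eq hYG hY hG
    exact ⟨F, hTY.trans hYF, hFG, hF, Or.inr hYF⟩

theorem exists_card_eq_subS_not_subS {α : Type*} [DecidableEq α] {G A X : Finset α}
    {k s : ℕ} {x : α} (hXG : X ⊆ G) (hxX : x ∈ X) (hxA : x ∉ A) (hs : s < k)
    (hG : k ≤ G.card) (hGA : s < (G \ A).card) (hX : k - s ≤ X.card) :
    ∃ F ⊆ G, F.card = k ∧ subS s F X ∧ ¬ subS s F A := by
  have hxGA : x ∈ G \ A := mem_sdiff.2 ⟨hXG hxX, hxA⟩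
  obtain ⟨T', hT'sub, hT'card⟩ := exists_subset_card_eq (s := (G \ A).erase x) (n := s)
    (by rw [card_erase_of_mem hxGA]; omega)
  have hxT' : x ∉ T' := fun h => by simpa using hT'sub h
  have hTsub : insert x T' ⊆ G \ A := insert_subset hxGA (hT'sub.trans (erase_subset _ _))
  have hTcard : (insert x T').card = s + 1 := by rw [card_insert_of_notMem hxT', hT'card]
  obtain ⟨F, hTF, hFG, hFcard, hFX⟩ := exists_subset_card_eq_of_subset_or_superset
    subset_union_right (union_subset hXG (hTsub.trans sdiff_subset)) (hTcard ▸ hs) hG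
  refine ⟨F, hFG, hFcard, subS_iff_card_sdiff_le.2 ?_, fun hFA => ?_⟩
  · rcases hFX with hFX | hXF
    · -- points of `F` outside `X` lie in `T'`, because `x ∈ X`
      refine le_of_le_of_eq (card_le_card fun y hy => ?_) hT'card
      rw [mem_sdiff] at hy
      have := hFX hy.1
      simp only [mem_union, mem_insert] at this
      rcases this with h | rfl | h
      exacts [absurd h hy.2, absurd hxX hy.2, h]
    · rw [card_sdiff_of_subset (subset_union_left.trans hXF)]
      omega
  · have hTFA : insert x T' ⊆ F \ A := fun y hy => mem_sdiff.2 ⟨hTF hy, (mem_sdiff.1 (hTsub hy)).2⟩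
    have := card_le_card hTFA
    rw [subS_iff_card_sdiff_le] at hFA
    omega

theorem card_Icc_one_sdiff_Icc (n a : ℕ) (ha : a ≤ n) :
    (Icc 1 n \ Icc (n - a + 1) n).card = n - a := by
  rw [card_sdiff_of_subset (Icc_subset_Icc (by omega) le_rfl), Nat.card_Icc, Nat.card_Icc]
  omega

theorem le_card_of_isEquitableColoring_Hfam {n r k s a : ℕ} {X₀ : Finset ℕ}
    {X : Fin r → Finset ℕ} (hr : 0 < r) (hn : r * k ≤ n) (hs : s < k) (hna : a + s < n)
    (ha : r * (k - s) - 1 ≤ a) (hX : IsEquitableColoring (Icc 1 n) r s (Hfam n k a s) X₀ X) :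
    n - a ≤ X₀.card := by
  obtain ⟨hX₀, hparts, hfree⟩ := hX
  by_contra! hlt
  have hcoloured : (Icc 1 n \ X₀).card = n - X₀.card := by
    rw [card_sdiff_of_subset hX₀, Nat.card_Icc]; omega
  obtain ⟨x, hxG, hxA⟩ := exists_mem_notMem_of_card_lt_card
    (s := Icc (n - a + 1) n) (t := Icc 1 n \ X₀) (by rw [hcoloured, Nat.card_Icc]; omega)
  obtain ⟨j, hxj⟩ := hparts.exists_mem hxG
  have hXj : k - s ≤ (X j).card :=
    hparts.le_card (by rw [Fintype.card_fin, hcoloured]; omega) j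
  have hkn : k ≤ (Icc 1 n).card := by
    rw [Nat.card_Icc]
    have := Nat.le_mul_of_pos_left k hr
    omega
  obtain ⟨F, hFG, hFcard, hFX, hFA⟩ := exists_card_eq_subS_not_subS
    ((hparts.subset j).trans sdiff_subset) hxj hxA hs hkn
    (by rw [card_Icc_one_sdiff_Icc n a (by omega)]; omega) hXj
  exact hfree F ⟨hFG, hFcard, hFA⟩ j hFX

theorem stmt3_general (n r k s a : ℕ) (hr : 2 ≤ r) (hn : r * k ≤ n)
    (hs : s < k) (hna : a + s < n) (ha : r * (k - s) - 1 ≤ a) :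
    ecd (Finset.Icc 1 n) r s (Hfam n k a s) = n - a := by
  obtain ⟨X, hX⟩ := exists_isEquitableColoring_sdiff (G := Icc 1 n) (r := r) (s := s)
    (F := Hfam n k a s) (by omega) (Icc_subset_Icc (by omega) le_rfl) fun B hB => hB.2.2
  refine le_antisymm (card_Icc_one_sdiff_Icc n a (by omega) ▸ ecd_le hX)
    (le_ecd ⟨_, X, hX⟩ fun X₀ Y hY => ?_)
  exact le_card_of_isEquitableColoring_Hfam (by omega) hn hs hna ha hY

theorem stmt3 (n r k s a : ℕ) (hk : 2 ≤ k) (hr : 2 ≤ r) (hn : r * k ≤ n)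
    (hs : s < k) (hna : a + s < n) (ha : r * (k - s) - 1 ≤ a) :
    ecd (Finset.Icc 1 n) r s (Hfam n k a s) = n - a :=
  stmt3_general n r k s a hr hn hs hna ha
end

section
/- Let n ≥ rk, r, k ≥ 2, 0 ≤ s < k, 0 ≤ a ≤ r(k-s-1), and A = {n-a+1,...,n}. There exists a partition P = {P_1,...,P_l} of [n] with |P_i| = r for 1 ≤ i ≤ k-s-1, |P_i| ≤ r for all i, and A ⊆ P_1 ∪ ... ∪ P_{k-s-1}; and for any such partition, every P-admissible k-subset F of [n] satisfies F ⊄_s A (i.e., F contains at most k-s-1 elements of A), so F ∈ H(n,k,a,s). -/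
open Finset

/-!
An admissible `F` meets each of the `k - s - 1` parts covering `A` at most once, so
`|F ∩ A| ≤ k - s - 1 < k - s`, which is exactly `F ⊄ₛ A`. For existence, cut the top
`r (k - s - 1)` elements of `[n]` into consecutive blocks of size `r` and split the rest
into singletons.
-/

theorem subS_iff_card_le_card_inter_add {α : Type*} [DecidableEq α] {s : ℕ} {F A : Finset α} :
    subS s F A ↔ F.card ≤ (F ∩ A).card + s := by
  have hsplit := card_sdiff_add_card_inter F A
  constructor
  · rintro ⟨E, hE, hFE⟩
    have hle : (F \ E).card ≤ (F ∩ A).card :=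
      card_le_card (subset_inter sdiff_subset hFE)
    have := le_card_sdiff E F
    omega
  · intro h
    refine ⟨F \ A, by omega, ?_⟩
    rw [sdiff_sdiff_right_self]
    exact inter_subset_right

theorem card_inter_le_card_of_subset_sup {α : Type*} [DecidableEq α] {F A : Finset α}
    {Q : Finset (Finset α)} (hA : A ⊆ Q.sup id) (hQ : ∀ p ∈ Q, (F ∩ p).card ≤ 1) :
    (F ∩ A).card ≤ Q.card := by
  have hcover : F ∩ A ⊆ Q.biUnion (F ∩ ·) := by
    intro x hx
    obtain ⟨p, hp, hxp⟩ := mem_sup.mp (hA (mem_inter.mp hx).2)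
    exact mem_biUnion.mpr ⟨p, hp, mem_inter.mpr ⟨(mem_inter.mp hx).1, hxp⟩⟩
  calc (F ∩ A).card ≤ (Q.biUnion (F ∩ ·)).card := card_le_card hcover
    _ ≤ ∑ p ∈ Q, (F ∩ p).card := card_biUnion_le
    _ ≤ ∑ _p ∈ Q, 1 := sum_le_sum hQ
    _ = Q.card := by simp

section Blocks

variable (m r : ℕ)

def block (i : ℕ) : Finset ℕ := Ioc (m + r * i) (m + r * i + r)

variable {m r}

theorem mem_block {i y : ℕ} : y ∈ block m r i ↔ m + r * i < y ∧ y ≤ m + r * i + r :=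
  mem_Ioc

theorem card_block (i : ℕ) : (block m r i).card = r := by
  simp [block]

theorem disjoint_block {i j : ℕ} (hij : i ≠ j) : Disjoint (block m r i) (block m r j) := by
  wlog hlt : i < j generalizing i j
  · exact (this hij.symm (by omega)).symm
  have : r * (i + 1) ≤ r * j := Nat.mul_le_mul_left r hlt
  refine disjoint_left.mpr fun y hi hj => ?_
  rw [mem_block] at hi hj
  rw [mul_add, mul_one] at this
  omega

theorem block_injective (hr : 0 < r) : Function.Injective (block m r) := by
  intro i j hij
  by_contra hne
  have hmem : m + r * i + 1 ∈ block m r i := mem_block.mpr ⟨by omega, by omega⟩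
  exact disjoint_left.mp (disjoint_block hne) hmem (hij ▸ hmem)

theorem sup_image_block (hr : 0 < r) (t : ℕ) :
    ((range t).image (block m r)).sup id = Icc (m + 1) (m + r * t) := by
  ext y
  simp only [sup_image, Function.id_comp, mem_sup, mem_range, mem_Icc]
  constructor
  · rintro ⟨i, hi, hy⟩
    have : r * (i + 1) ≤ r * t := Nat.mul_le_mul_left r hi
    rw [mem_block] at hy
    rw [mul_add, mul_one] at this
    omega
  · rintro ⟨hlo, hhi⟩
    -- `y` lies in the block indexed by the quotient of its offset `y - m - 1` by `r`
    set d := y - m - 1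
    have hdiv := Nat.div_add_mod d r
    have hmod := Nat.mod_lt d hr
    have hlt : r * (d / r) < r * t := by omega
    exact ⟨d / r, Nat.lt_of_mul_lt_mul_left hlt, mem_block.mpr ⟨by omega, by omega⟩⟩

end Blocks

theorem exists_partition_with_blocks (n r t : ℕ) (hr : 0 < r) (h : r * t ≤ n) :
    ∃ P : Finset (Finset ℕ), IsPartition n P ∧ (∀ p ∈ P, p.card ≤ r) ∧
      ∃ Q ⊆ P, Q.card = t ∧ (∀ p ∈ Q, p.card = r) ∧ Icc (n - r * t + 1) n ⊆ Q.sup id := by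
  set m := n - r * t
  set S := (Icc 1 m).image ({·} : ℕ → Finset ℕ)
  set Q := (range t).image (block m r)
  have hS : S.sup id = Icc 1 m := by
    ext y
    simp [S]
  have hQ : Q.sup id = Icc (m + 1) n := by
    rw [sup_image_block hr]
    congr 1
    omega
  have hdisj : ∀ x ∈ Icc 1 m, ∀ i, Disjoint {x} (block m r i) := by
    intro x hx i
    rw [disjoint_singleton_left, mem_block]
    rw [mem_Icc] at hx
    omega
  refine ⟨S ∪ Q, ⟨?_, ?_⟩, ?_, Q, subset_union_right, ?_, ?_, hQ ▸ subset_refl _⟩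
  · simp only [S, Q, mem_union, mem_image, mem_range]
    rintro _ (⟨x, hx, rfl⟩ | ⟨i, -, rfl⟩) _ (⟨y, hy, rfl⟩ | ⟨j, -, rfl⟩) hne
    · exact disjoint_singleton.mpr fun h => hne (h ▸ rfl)
    · exact hdisj x hx j
    · exact (hdisj y hy i).symm
    · exact disjoint_block fun h => hne (h ▸ rfl)
  · rw [sup_union, hS, hQ]
    ext y
    simp only [sup_eq_union, mem_union, mem_Icc]
    omega
  · simp only [S, Q, mem_union, mem_image, mem_range]
    rintro _ (⟨x, -, rfl⟩ | ⟨i, -, rfl⟩)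
    · rw [card_singleton]
      omega
    · exact (card_block i).le
  · rw [card_image_of_injective _ (block_injective hr), card_range]
  · simp only [Q, mem_image]
    rintro _ ⟨i, -, rfl⟩
    exact card_block i

theorem stmt19_general (n r k s a : ℕ) (hn : r * k ≤ n) (hr : 2 ≤ r)
    (hs : s < k) (ha : a ≤ r * (k - s - 1)) :
    (∃ P : Finset (Finset ℕ), IsPartition n P ∧ (∀ p ∈ P, p.card ≤ r) ∧
      ∃ Q ⊆ P, Q.card = k - s - 1 ∧ (∀ p ∈ Q, p.card = r) ∧
        Finset.Icc (n - a + 1) n ⊆ Q.sup id) ∧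
    (∀ P : Finset (Finset ℕ), IsPartition n P → (∀ p ∈ P, p.card ≤ r) →
      ∀ Q ⊆ P, Q.card = k - s - 1 → (∀ p ∈ Q, p.card = r) →
        Finset.Icc (n - a + 1) n ⊆ Q.sup id →
        ∀ F ⊆ Finset.Icc 1 n, F.card = k → Adm P F →
          (F ∩ Finset.Icc (n - a + 1) n).card ≤ k - s - 1 ∧
          ¬ subS s F (Finset.Icc (n - a + 1) n) ∧ F ∈ Hfam n k a s) := by
  constructor
  · have hrt : r * (k - s - 1) ≤ n := le_trans (Nat.mul_le_mul_left r (by omega)) hn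
    obtain ⟨P, hP, hPr, Q, hQP, hQ, hQr, hQA⟩ :=
      exists_partition_with_blocks n r (k - s - 1) (by omega) hrt
    exact ⟨P, hP, hPr, Q, hQP, hQ, hQr, (Icc_subset_Icc (by omega) le_rfl).trans hQA⟩
  · intro P _ _ Q hQP hQ _ hAQ F hF hFk hadm
    have hcard : (F ∩ Icc (n - a + 1) n).card ≤ k - s - 1 :=
      hQ ▸ card_inter_le_card_of_subset_sup hAQ fun p hp => hadm p (hQP hp)
    have hnot : ¬ subS s F (Icc (n - a + 1) n) := by
      rw [subS_iff_card_le_card_inter_add]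
      omega
    exact ⟨hcard, hnot, hF, hFk, hnot⟩

theorem stmt19 (n r k s a : ℕ) (hn : r * k ≤ n) (hr : 2 ≤ r) (hk : 2 ≤ k)
    (hs : s < k) (ha : a ≤ r * (k - s - 1)) :
    (∃ P : Finset (Finset ℕ), IsPartition n P ∧ (∀ p ∈ P, p.card ≤ r) ∧
      ∃ Q ⊆ P, Q.card = k - s - 1 ∧ (∀ p ∈ Q, p.card = r) ∧
        Finset.Icc (n - a + 1) n ⊆ Q.sup id) ∧
    (∀ P : Finset (Finset ℕ), IsPartition n P → (∀ p ∈ P, p.card ≤ r) →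
      ∀ Q ⊆ P, Q.card = k - s - 1 → (∀ p ∈ Q, p.card = r) →
        Finset.Icc (n - a + 1) n ⊆ Q.sup id →
        ∀ F ⊆ Finset.Icc 1 n, F.card = k → Adm P F →
          (F ∩ Finset.Icc (n - a + 1) n).card ≤ k - s - 1 ∧
          ¬ subS s F (Finset.Icc (n - a + 1) n) ∧ F ∈ Hfam n k a s) :=
  stmt19_general n r k s a hn hr hs ha
end
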